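/- Let R_1 and R_2 be boxes in Z^2 (induced subgraphs on coordinate-aligned rectangles of vertices) such that (E(R_1) ∪ ∂R_1) ∩ E(R_2) ≠ ∅ and neither box's vertex set is contained in the other's. Then |∂(R_1 ∪ R_2)| ≤ |∂R_1| + |∂R_2| − 4, where R_1 ∪ R_2 denotes the subgraph with vertex set V(R_1)∪V(R_2) and edge set E(R_1)∪E(R_2). -/

import Mathlib

open SimpleGraph

/-- The square lattice `ℤ²`. -/
def Grid : SimpleGraph (ℤ × ℤ) where
  Adj u v := |u.1 - v.1| + |u.2 - v.2| = 1
  symm := ⟨fun u v h => by simpa [abs_sub_comm] using h⟩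
  loopless := ⟨fun u h => by simp at h⟩

/-- The edge boundary of a subgraph `H` of `ℤ²`: edges of the lattice not in `H`
but incident to a vertex of `H`. -/
def edgeBoundary (H : Grid.Subgraph) : Set (Sym2 (ℤ × ℤ)) :=
  {e | e ∈ Grid.edgeSet ∧ e ∉ H.edgeSet ∧ ∃ v ∈ H.verts, v ∈ e}
/-- The box subgraph induced on `{(x,y) : a ≤ x ≤ b, c ≤ y ≤ d}`. -/
def boxSubgraph (a b c d : ℤ) : Grid.Subgraph :=
  (⊤ : Grid.Subgraph).induce {p | a ≤ p.1 ∧ p.1 ≤ b ∧ c ≤ p.2 ∧ p.2 ≤ d}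

lemma grid_adj_of (u v : ℤ × ℤ) (h : |u.1 - v.1| + |u.2 - v.2| = 1) : Grid.Adj u v := h

lemma grid_adj_def {u v : ℤ × ℤ} (h : Grid.Adj u v) : |u.1 - v.1| + |u.2 - v.2| = 1 := h

lemma grid_adj_cases {u v : ℤ × ℤ} (h : Grid.Adj u v) :
    v = (u.1 + 1, u.2) ∨ v = (u.1 - 1, u.2) ∨ v = (u.1, u.2 + 1) ∨ v = (u.1, u.2 - 1) := by
  have h' := grid_adj_def h
  simp only [Prod.ext_iff]
  rcases abs_cases (u.1 - v.1) with ⟨h1, _⟩ | ⟨h1, _⟩ <;>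
    rcases abs_cases (u.2 - v.2) with ⟨h2, _⟩ | ⟨h2, _⟩ <;> omega

lemma mem_box_verts {a b c d : ℤ} {p : ℤ × ℤ} :
    p ∈ (boxSubgraph a b c d).verts ↔ a ≤ p.1 ∧ p.1 ≤ b ∧ c ≤ p.2 ∧ p.2 ≤ d := Iff.rfl

lemma mem_box_edgeSet {a b c d : ℤ} {u v : ℤ × ℤ} :
    s(u, v) ∈ (boxSubgraph a b c d).edgeSet ↔
      u ∈ (boxSubgraph a b c d).verts ∧ v ∈ (boxSubgraph a b c d).verts ∧ Grid.Adj u v := by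
  rw [Subgraph.mem_edgeSet, boxSubgraph, Subgraph.induce_adj]
  simp [mem_box_verts, boxSubgraph]

lemma edgeBoundary_box_finite (a b c d : ℤ) : (edgeBoundary (boxSubgraph a b c d)).Finite := by
  set W : Set (ℤ × ℤ) := {p | a - 1 ≤ p.1 ∧ p.1 ≤ b + 1 ∧ c - 1 ≤ p.2 ∧ p.2 ≤ d + 1} with hW
  have hWfin : W.Finite := by
    refine ((Set.finite_Icc (a - 1) (b + 1)).prod (Set.finite_Icc (c - 1) (d + 1))).subset ?_
    rintro ⟨x, y⟩ ⟨h1, h2, h3, h4⟩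
    exact ⟨⟨h1, h2⟩, ⟨h3, h4⟩⟩
  refine ((hWfin.prod hWfin).image (fun p => s(p.1, p.2))).subset ?_
  rintro e ⟨hg, hne, v, hv, hve⟩
  induction e using Sym2.ind with
  | _ x y =>
    have hadj : Grid.Adj x y := hg
    rw [mem_box_verts] at hv
    have hx : x ∈ W ∧ y ∈ W := by
      rcases Sym2.mem_iff.mp hve with rfl | rfl
      · rcases grid_adj_cases hadj with rfl | rfl | rfl | rfl <;>
          exact ⟨⟨by omega, by omega, by omega, by omega⟩, ⟨by omega, by omega, by omega, by omega⟩⟩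
      · rcases grid_adj_cases (hadj.symm) with rfl | rfl | rfl | rfl <;>
          exact ⟨⟨by omega, by omega, by omega, by omega⟩, ⟨by omega, by omega, by omega, by omega⟩⟩
    exact ⟨(x, y), ⟨hx.1, hx.2⟩, rfl⟩

lemma edgeBoundary_sup (R₁ R₂ : Grid.Subgraph) :
    edgeBoundary (R₁ ⊔ R₂) =
      (edgeBoundary R₁ ∪ edgeBoundary R₂) \ (R₁.edgeSet ∪ R₂.edgeSet) := by
  ext e
  constructor
  · rintro ⟨hg, hne, v, hv, hve⟩
    rw [Subgraph.edgeSet_sup] at hne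
    rw [Subgraph.verts_sup] at hv
    refine ⟨?_, hne⟩
    rcases hv with hv | hv
    · exact Or.inl ⟨hg, fun h => hne (Or.inl h), v, hv, hve⟩
    · exact Or.inr ⟨hg, fun h => hne (Or.inr h), v, hv, hve⟩
  · rintro ⟨h | h, hne⟩ <;> obtain ⟨hg, _, v, hv, hve⟩ := h
    · exact ⟨hg, by rwa [Subgraph.edgeSet_sup], v, by rw [Subgraph.verts_sup]; exact Or.inl hv, hve⟩
    · exact ⟨hg, by rwa [Subgraph.edgeSet_sup], v, by rw [Subgraph.verts_sup]; exact Or.inr hv, hve⟩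

/-- Any grid edge with one endpoint in both boxes and the other endpoint missing
at least one box is a "saving" edge. -/
lemma mem_savings {a₁ b₁ c₁ d₁ a₂ b₂ c₂ d₂ : ℤ} {v w : ℤ × ℤ}
    (hv₁ : v ∈ (boxSubgraph a₁ b₁ c₁ d₁).verts) (hv₂ : v ∈ (boxSubgraph a₂ b₂ c₂ d₂).verts)
    (hadj : Grid.Adj v w)
    (hw : w ∉ (boxSubgraph a₁ b₁ c₁ d₁).verts ∨ w ∉ (boxSubgraph a₂ b₂ c₂ d₂).verts) :
    s(v, w) ∈ (edgeBoundary (boxSubgraph a₁ b₁ c₁ d₁) ∩ edgeBoundary (boxSubgraph a₂ b₂ c₂ d₂)) ∪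
      ((edgeBoundary (boxSubgraph a₁ b₁ c₁ d₁) ∪ edgeBoundary (boxSubgraph a₂ b₂ c₂ d₂)) ∩
        ((boxSubgraph a₁ b₁ c₁ d₁).edgeSet ∪ (boxSubgraph a₂ b₂ c₂ d₂).edgeSet)) := by
  have hg : s(v, w) ∈ Grid.edgeSet := hadj
  have hvm : v ∈ s(v, w) := Sym2.mem_mk_left v w
  by_cases hw₁ : w ∈ (boxSubgraph a₁ b₁ c₁ d₁).verts <;>
    by_cases hw₂ : w ∈ (boxSubgraph a₂ b₂ c₂ d₂).verts
  · tauto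
  · refine Or.inr ⟨Or.inr ⟨hg, fun h => hw₂ (mem_box_edgeSet.mp h).2.1, v, hv₂, hvm⟩,
      Or.inl (mem_box_edgeSet.mpr ⟨hv₁, hw₁, hadj⟩)⟩
  · refine Or.inr ⟨Or.inl ⟨hg, fun h => hw₁ (mem_box_edgeSet.mp h).2.1, v, hv₁, hvm⟩,
      Or.inr (mem_box_edgeSet.mpr ⟨hv₂, hw₂, hadj⟩)⟩
  · exact Or.inl ⟨⟨hg, fun h => hw₁ (mem_box_edgeSet.mp h).2.1, v, hv₁, hvm⟩,
      ⟨hg, fun h => hw₂ (mem_box_edgeSet.mp h).2.1, v, hv₂, hvm⟩⟩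

/-- If two boxes box-intersect and neither is contained in the other, then the
boundary of their union is at most `|∂R₁| + |∂R₂| - 4`. -/
theorem edgeBoundary_union_boxes (a₁ b₁ c₁ d₁ a₂ b₂ c₂ d₂ : ℤ)
    (h₁ : a₁ ≤ b₁) (h₁' : c₁ ≤ d₁) (h₂ : a₂ ≤ b₂) (h₂' : c₂ ≤ d₂)
    (R₁ : Grid.Subgraph) (R₂ : Grid.Subgraph)
    (hR₁ : R₁ = boxSubgraph a₁ b₁ c₁ d₁) (hR₂ : R₂ = boxSubgraph a₂ b₂ c₂ d₂)
    (hint : ((R₁.edgeSet ∪ edgeBoundary R₁) ∩ R₂.edgeSet).Nonempty)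
    (hns₁ : ¬ R₁.verts ⊆ R₂.verts) (hns₂ : ¬ R₂.verts ⊆ R₁.verts) :
    (edgeBoundary (R₁ ⊔ R₂)).ncard + 4
      ≤ (edgeBoundary R₁).ncard + (edgeBoundary R₂).ncard := by
  subst hR₁ hR₂
  set B₁ := boxSubgraph a₁ b₁ c₁ d₁ with hB₁
  set B₂ := boxSubgraph a₂ b₂ c₂ d₂ with hB₂
  set S₁ := edgeBoundary B₁ with hS₁
  set S₂ := edgeBoundary B₂ with hS₂
  have hS₁fin : S₁.Finite := edgeBoundary_box_finite _ _ _ _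
  have hS₂fin : S₂.Finite := edgeBoundary_box_finite _ _ _ _
  -- A common vertex of the two boxes.
  obtain ⟨u, hu₁, hu₂⟩ : ∃ u, u ∈ B₁.verts ∧ u ∈ B₂.verts := by
    obtain ⟨e, he, he₂⟩ := hint
    induction e using Sym2.ind with
    | _ x y =>
      have hx₂ : x ∈ B₂.verts := (mem_box_edgeSet.mp he₂).1
      have hy₂ : y ∈ B₂.verts := (mem_box_edgeSet.mp he₂).2.1
      rcases he with he | he
      · exact ⟨x, (mem_box_edgeSet.mp he).1, hx₂⟩
      · obtain ⟨_, _, v, hv, hve⟩ := he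
        rcases Sym2.mem_iff.mp hve with rfl | rfl
        · exact ⟨v, hv, hx₂⟩
        · exact ⟨v, hv, hy₂⟩
  obtain ⟨hua₁, hub₁, huc₁, hud₁⟩ := mem_box_verts.mp hu₁
  obtain ⟨hua₂, hub₂, huc₂, hud₂⟩ := mem_box_verts.mp hu₂
  set A := max a₁ a₂ with hA
  set B := min b₁ b₂ with hB
  set C := max c₁ c₂ with hC
  set D := min d₁ d₂ with hD
  have hAB : A ≤ B := by omega
  have hCD : C ≤ D := by omega
  -- The four saving edges.
  set T : Set (Sym2 (ℤ × ℤ)) :=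
    (S₁ ∩ S₂) ∪ ((S₁ ∪ S₂) ∩ (B₁.edgeSet ∪ B₂.edgeSet)) with hT
  set e₁ : Sym2 (ℤ × ℤ) := s((A, C), (A - 1, C)) with he₁
  set e₂ : Sym2 (ℤ × ℤ) := s((B, C), (B + 1, C)) with he₂
  set e₃ : Sym2 (ℤ × ℤ) := s((A, C), (A, C - 1)) with he₃
  set e₄ : Sym2 (ℤ × ℤ) := s((A, D), (A, D + 1)) with he₄
  have hmem₁ : e₁ ∈ T := by
    refine mem_savings ⟨by omega, by omega, by omega, by omega⟩
      ⟨by omega, by omega, by omega, by omega⟩ (grid_adj_of _ _ (by simp)) ?_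
    rcases le_total a₁ a₂ with h | h
    · exact Or.inr fun hm => by have := (mem_box_verts.mp hm).1; simp at this; omega
    · exact Or.inl fun hm => by have := (mem_box_verts.mp hm).1; simp at this; omega
  have hmem₂ : e₂ ∈ T := by
    refine mem_savings ⟨by omega, by omega, by omega, by omega⟩
      ⟨by omega, by omega, by omega, by omega⟩ (grid_adj_of _ _ (by simp)) ?_
    rcases le_total b₁ b₂ with h | h
    · exact Or.inl fun hm => by have := (mem_box_verts.mp hm).2.1; simp at this; omega
    · exact Or.inr fun hm => by have := (mem_box_verts.mp hm).2.1; simp at this; omega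
  have hmem₃ : e₃ ∈ T := by
    refine mem_savings ⟨by omega, by omega, by omega, by omega⟩
      ⟨by omega, by omega, by omega, by omega⟩ (grid_adj_of _ _ (by simp)) ?_
    rcases le_total c₁ c₂ with h | h
    · exact Or.inr fun hm => by have := (mem_box_verts.mp hm).2.2.1; simp at this; omega
    · exact Or.inl fun hm => by have := (mem_box_verts.mp hm).2.2.1; simp at this; omega
  have hmem₄ : e₄ ∈ T := by
    refine mem_savings ⟨by omega, by omega, by omega, by omega⟩
      ⟨by omega, by omega, by omega, by omega⟩ (grid_adj_of _ _ (by simp)) ?_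
    rcases le_total d₁ d₂ with h | h
    · exact Or.inl fun hm => by have := (mem_box_verts.mp hm).2.2.2; simp at this; omega
    · exact Or.inr fun hm => by have := (mem_box_verts.mp hm).2.2.2; simp at this; omega
  have hTsub : T ⊆ S₁ ∪ S₂ := by
    rintro e (⟨h, _⟩ | ⟨h, _⟩)
    · exact Or.inl h
    · exact h
  have hTfin : T.Finite := (hS₁fin.union hS₂fin).subset hTsub
  -- |T| ≥ 4
  have hcard4 : 4 ≤ T.ncard := by
    have hsub : ({e₁, e₂, e₃, e₄} : Set (Sym2 (ℤ × ℤ))) ⊆ T := by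
      rintro e (rfl | rfl | rfl | rfl)
      exacts [hmem₁, hmem₂, hmem₃, hmem₄]
    have h4 : ({e₁, e₂, e₃, e₄} : Set (Sym2 (ℤ × ℤ))).ncard = 4 := by
      rw [Set.ncard_insert_of_notMem
          (by simp [he₁, he₂, he₃, he₄, Sym2.eq_iff, Prod.ext_iff]; omega),
        Set.ncard_insert_of_notMem
          (by simp [he₂, he₃, he₄, Sym2.eq_iff, Prod.ext_iff]; omega),
        Set.ncard_insert_of_notMem
          (by simp [he₃, he₄, Sym2.eq_iff, Prod.ext_iff]; omega),
        Set.ncard_singleton]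
    calc 4 = ({e₁, e₂, e₃, e₄} : Set (Sym2 (ℤ × ℤ))).ncard := h4.symm
      _ ≤ T.ncard := Set.ncard_le_ncard hsub hTfin
  -- counting
  set X := S₁ ∪ S₂ with hX
  set Y := B₁.edgeSet ∪ B₂.edgeSet with hY
  have hXfin : X.Finite := hS₁fin.union hS₂fin
  have hXY : (X ∩ Y).ncard + (X \ Y).ncard = X.ncard :=
    Set.ncard_inter_add_ncard_diff_eq_ncard X Y hXfin
  have hUI : X.ncard + (S₁ ∩ S₂).ncard = S₁.ncard + S₂.ncard :=
    Set.ncard_union_add_ncard_inter S₁ S₂ hS₁fin hS₂fin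
  have hdisj : Disjoint (S₁ ∩ S₂) (X ∩ Y) := by
    rw [Set.disjoint_left]
    rintro e ⟨heS₁, heS₂⟩ ⟨_, heY | heY⟩
    · exact heS₁.2.1 heY
    · exact heS₂.2.1 heY
  have hTcard : T.ncard = (S₁ ∩ S₂).ncard + (X ∩ Y).ncard :=
    Set.ncard_union_eq hdisj (hS₁fin.subset Set.inter_subset_left)
      (hXfin.subset Set.inter_subset_left)
  have hBU : (edgeBoundary (B₁ ⊔ B₂)).ncard = (X \ Y).ncard := by
    rw [edgeBoundary_sup]
  rw [hBU]
  omega
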